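/- arXiv:2206.11845 — 4 statements merged into one kernel-verified Lean document; each statement's English description precedes it below -/
import Mathlib

section
/- In the sequential Setchain state machine, in every reachable state the sets history(1), ..., history(epoch) are pairwise disjoint. -/
structure SCState (E : Type*) where
  theset : Set E
  history : ℕ → Set E
  epoch : ℕ

def SCInit (E : Type*) : SCState E := ⟨∅, fun _ => ∅, 0⟩

inductive SCStep (E : Type*) : SCState E → SCState E → Prop
  | add (s : SCState E) (e : E) :
      SCStep E s ⟨s.theset ∪ {e}, s.history, s.epoch⟩
  | epochInc (s : SCState E) (E' : Set E)
      (hE' : E' ⊆ s.theset \ ⋃ k ≤ s.epoch, s.history k) :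
      SCStep E s
        ⟨s.theset, Function.update s.history (s.epoch + 1) E', s.epoch + 1⟩

def SCReachable {E : Type*} (s : SCState E) : Prop :=
  Relation.ReflTransGen (SCStep E) (SCInit E) s

theorem Set.PairwiseDisjoint.insert_update {ι α : Type*} [DecidableEq ι] {s : Set ι}
    {f : ι → Set α} (hs : s.PairwiseDisjoint f) {i : ι} (hi : i ∉ s) {t : Set α}
    (ht : ∀ j ∈ s, Disjoint t (f j)) :
    (insert i s).PairwiseDisjoint (Function.update f i t) := by
  have hne : ∀ j ∈ s, j ≠ i := fun j hj hji => hi (hji ▸ hj)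
  refine (hs.mono_on fun j hj => (Function.update_of_ne (hne j hj) _ _).le).insert_of_notMem hi
    fun j hj => ?_
  rw [Function.update_self, Function.update_of_ne (hne j hj)]
  exact ht j hj

namespace SCStep

variable {E : Type*} {s t : SCState E}

theorem pairwiseDisjoint_history (h : SCStep E s t)
    (hs : (Set.Icc 1 s.epoch).PairwiseDisjoint s.history) :
    (Set.Icc 1 t.epoch).PairwiseDisjoint t.history := by
  cases h with
  | add => exact hs
  | epochInc E' hE' =>
    rw [← Set.insert_Icc_right_eq_Icc_add_one (by omega)]
    refine hs.insert_update (fun h => by simp at h) fun j hj => ?_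
    exact Set.disjoint_sdiff_left.mono hE'
      (Set.subset_iUnion₂ (s := fun k (_ : k ≤ s.epoch) => s.history k) j hj.2)

end SCStep

theorem SCReachable.pairwiseDisjoint_history {E : Type*} {s : SCState E} (hs : SCReachable s) :
    (Set.Icc 1 s.epoch).PairwiseDisjoint s.history := by
  induction hs with
  | refl => simp [SCInit]
  | tail _ hstep ih => exact hstep.pairwiseDisjoint_history ih

theorem unique_epoch_invariant {E : Type*} (s : SCState E)
    (hs : SCReachable s) :
    ∀ i j, 1 ≤ i → i ≤ s.epoch → 1 ≤ j → j ≤ s.epoch → i ≠ j →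
      s.history i ∩ s.history j = ∅ :=
  fun _ _ hi₁ hi₂ hj₁ hj₂ hij => Set.disjoint_iff_inter_eq_empty.mp <|
    hs.pairwiseDisjoint_history ⟨hi₁, hi₂⟩ ⟨hj₁, hj₂⟩ hij
end

section
/- In the sequential Setchain state machine, history is monotone along executions: if state s' is reachable from state s, then s.epoch ≤ s'.epoch and for every i ≤ s.epoch, s.history(i) = s'.history(i). -/
/-! Every step extends the state it starts from: `add` leaves epoch and history untouched, and
`epochInc` writes only at the fresh index `epoch + 1`. Extension is a preorder, so it passes to
the reflexive-transitive closure of the step relation. -/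

namespace SCState

variable {E : Type*}

def Extends (s t : SCState E) : Prop :=
  s.epoch ≤ t.epoch ∧ ∀ i ≤ s.epoch, s.history i = t.history i

instance : Std.Refl (Extends (E := E)) :=
  ⟨fun _ => ⟨le_rfl, fun _ _ => rfl⟩⟩

instance : IsTrans (SCState E) Extends :=
  ⟨fun _ _ _ ⟨hle₁, hhist₁⟩ ⟨hle₂, hhist₂⟩ =>
    ⟨hle₁.trans hle₂, fun i hi => (hhist₁ i hi).trans (hhist₂ i (hi.trans hle₁))⟩⟩

end SCState

theorem SCStep.extends {E : Type*} {s t : SCState E} (h : SCStep E s t) : s.Extends t := by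
  cases h with
  | add => exact ⟨le_rfl, fun _ _ => rfl⟩
  | epochInc =>
    exact ⟨Nat.le_succ _, fun i hi =>
      (Function.update_of_ne (by omega) _ _).symm⟩

theorem history_monotone {E : Type*} (s s' : SCState E)
    (h : Relation.ReflTransGen (SCStep E) s s') :
    s.epoch ≤ s'.epoch ∧ ∀ i ≤ s.epoch, s.history i = s'.history i := by
  have hext : Relation.ReflTransGen SCState.Extends s s' :=
    Relation.ReflTransGen.mono (fun _ _ => SCStep.extends) _ _ h
  rwa [Relation.reflTransGen_eq_self] at hext
end

section
/- In the sequential Setchain state machine, if e ∈ history(i) in some reachable state, then there was an Add(e) or an EpochInc whose proposed set contained e earlier in the execution; in the basic machine (where EpochInc only stamps elements of theset), there was an Add(e) earlier in the execution. -/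
inductive SCAction (E : Type*)
  | add (e : E)
  | epochInc (E' : Set E)

inductive SCLStep (E : Type*) : SCState E → SCAction E → SCState E → Prop
  | add (s : SCState E) (e : E) :
      SCLStep E s (.add e) ⟨s.theset ∪ {e}, s.history, s.epoch⟩
  | epochInc (s : SCState E) (E' : Set E)
      (hE' : E' ⊆ s.theset \ ⋃ k ≤ s.epoch, s.history k) :
      SCLStep E s (.epochInc E')
        ⟨s.theset, Function.update s.history (s.epoch + 1) E', s.epoch + 1⟩

/-- `SCReaches s tr s'`: the finite execution with action trace `tr`
leads from `s` to `s'`. -/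
inductive SCReaches (E : Type*) : SCState E → List (SCAction E) → SCState E → Prop
  | nil (s : SCState E) : SCReaches E s [] s
  | cons {s s' s'' : SCState E} {a : SCAction E} {tr : List (SCAction E)}
      (hstep : SCLStep E s a s') (htail : SCReaches E s' tr s'') :
      SCReaches E s (a :: tr) s''


lemma aux_reach {E : Type*} {s s' : SCState E} {tr : List (SCAction E)}
    (hrun : SCReaches E s tr s') (e : E)
    (he : e ∈ s'.theset ∪ ⋃ j, s'.history j) :
    SCAction.add e ∈ tr ∨ e ∈ s.theset ∪ ⋃ j, s.history j := by
  induction hrun with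
  | nil s => exact Or.inr he
  | @cons s0 s1 s2 a tr0 hstep htail ih =>
    rcases ih he with h | h
    · exact Or.inl (List.mem_cons_of_mem _ h)
    · cases hstep with
      | add e' =>
        simp only [Set.mem_union, Set.mem_iUnion] at h
        rcases h with h | ⟨j, hj⟩
        · rcases h with h | h
          · exact Or.inr (Or.inl h)
          · simp at h; subst h; exact Or.inl List.mem_cons_self
        · exact Or.inr (Or.inr (Set.mem_iUnion.2 ⟨j, hj⟩))
      | epochInc E' hE' =>
        refine Or.inr ?_
        simp only [Set.mem_union, Set.mem_iUnion] at h ⊢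
        rcases h with h | ⟨j, hj⟩
        · exact Or.inl h
        · by_cases hje : j = s0.epoch + 1
          · subst hje
            rw [Function.update_self] at hj
            exact Or.inl (hE' hj).1
          · rw [Function.update_of_ne hje] at hj
            exact Or.inr ⟨j, hj⟩

theorem add_before_get {E : Type*} (tr : List (SCAction E)) (s : SCState E)
    (hrun : SCReaches E (SCInit E) tr s)
    (e : E) (i : ℕ) (he : e ∈ s.history i) :
    SCAction.add e ∈ tr := by
  rcases aux_reach hrun e (Or.inr (Set.mem_iUnion.2 ⟨i, he⟩)) with h | h
  · exact h
  · simp [SCInit] at h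
end

section
/- In the sequential Setchain state machine, if e ∈ theset in some state and from every state an EpochInc transition stamping all currently-unstamped elements of theset is eventually taken, then eventually e ∈ ⋃_{k ≤ epoch} history(k) and remains there forever. -/
/-- The "full" epoch-increment step stamping all unstamped elements. -/
def FullEpochInc {E : Type*} (s s' : SCState E) : Prop :=
  s' = ⟨s.theset,
        Function.update s.history (s.epoch + 1)
          (s.theset \ ⋃ k ≤ s.epoch, s.history k),
        s.epoch + 1⟩

/-! Every step keeps `theset` and the set of stamped elements `⋃ k ≤ epoch, history k` from
shrinking (an epoch increment only writes the fresh slot `epoch + 1`), and a full epoch increment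
stamps all of `theset`. So once `e` has been added, the next full epoch increment stamps it for
good. -/

namespace SCState

variable {E : Type*}

def stamped (s : SCState E) : Set E :=
  ⋃ k ≤ s.epoch, s.history k

lemma stamped_subset_stamped_of_update (s : SCState E) (E' : Set E) :
    s.stamped ⊆ (⟨s.theset, Function.update s.history (s.epoch + 1) E', s.epoch + 1⟩ :
      SCState E).stamped := by
  intro x hx
  simp only [stamped, Set.mem_iUnion] at hx ⊢
  obtain ⟨k, hk, hxk⟩ := hx
  exact ⟨k, hk.trans (Nat.le_succ _), by rwa [Function.update_of_ne (by omega)]⟩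

end SCState

namespace SCStep

variable {E : Type*} {s s' : SCState E}

lemma theset_subset (h : SCStep E s s') : s.theset ⊆ s'.theset := by
  cases h with
  | add e => exact Set.subset_union_left
  | epochInc E' _ => exact subset_rfl

lemma stamped_subset (h : SCStep E s s') : s.stamped ⊆ s'.stamped := by
  cases h with
  | add e => exact subset_rfl
  | epochInc E' _ => exact s.stamped_subset_stamped_of_update E'

end SCStep

lemma FullEpochInc.theset_subset_stamped {E : Type*} {s s' : SCState E}
    (h : FullEpochInc s s') : s.theset ⊆ s'.stamped := by
  subst h
  intro x hx
  by_cases hxs : x ∈ s.stamped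
  · exact s.stamped_subset_stamped_of_update _ hxs
  · simp only [SCState.stamped, Set.mem_iUnion]
    exact ⟨s.epoch + 1, le_rfl, by rw [Function.update_self]; exact ⟨hx, hxs⟩⟩

section Run

variable {E : Type*} {ρ : ℕ → SCState E}

lemma monotone_theset_of_run (hstep : ∀ n, SCStep E (ρ n) (ρ (n + 1))) :
    Monotone fun n => (ρ n).theset :=
  monotone_nat_of_le_succ fun n => (hstep n).theset_subset

lemma monotone_stamped_of_run (hstep : ∀ n, SCStep E (ρ n) (ρ (n + 1))) :
    Monotone fun n => (ρ n).stamped :=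
  monotone_nat_of_le_succ fun n => (hstep n).stamped_subset

end Run

theorem eventual_get_general {E : Type*} (ρ : ℕ → SCState E)
    (hstep : ∀ n, SCStep E (ρ n) (ρ (n + 1)))
    (hfair : ∀ N, ∃ n ≥ N, FullEpochInc (ρ n) (ρ (n + 1)))
    (e : E) (m : ℕ) (he : e ∈ (ρ m).theset) :
    ∃ N, ∀ n ≥ N, e ∈ ⋃ k ≤ (ρ n).epoch, (ρ n).history k := by
  obtain ⟨n, hmn, hfull⟩ := hfair m
  have hstamped : e ∈ (ρ (n + 1)).stamped :=
    hfull.theset_subset_stamped (monotone_theset_of_run hstep hmn he)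
  exact ⟨n + 1, fun p hp => monotone_stamped_of_run hstep hp hstamped⟩

theorem eventual_get {E : Type*} (ρ : ℕ → SCState E)
    (hinit : ρ 0 = SCInit E)
    (hstep : ∀ n, SCStep E (ρ n) (ρ (n + 1)))
    (hfair : ∀ N, ∃ n ≥ N, FullEpochInc (ρ n) (ρ (n + 1)))
    (e : E) (m : ℕ) (he : e ∈ (ρ m).theset) :
    ∃ N, ∀ n ≥ N, e ∈ ⋃ k ≤ (ρ n).epoch, (ρ n).history k :=
  eventual_get_general ρ hstep hfair e m he
end
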